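/- For every r ∈ Ω the curvature vector K(r) = (K_1,…,K_N) lies in Y; explicitly, Σ_{i=1}^N K_i = 2πχ(M), and for every nonempty proper subset A ⊂ V one has Σ_{i∈A} K_i > −Σ_{(e,v)∈Lk(A)} (π − Λ(I_e)) + 2πχ(F_A). -/
import Mathlib


open Real Filter Topology

namespace IDCP

variable {N : ℕ}

/-- The set of edges: 2-element subsets of vertices contained in some face. -/
def edges (Fc : Finset (Finset (Fin N))) : Finset (Finset (Fin N)) :=
  Fc.biUnion fun f => f.powersetCard 2

/-- `Fc` is the face set of a triangulation of a closed connected surface: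
every face has 3 vertices, every edge lies in exactly two faces, and the
1-skeleton is connected. -/
structure IsTriangulation (Fc : Finset (Finset (Fin N))) : Prop where
  card3 : ∀ f ∈ Fc, f.card = 3
  edge2 : ∀ e ∈ edges Fc, (Fc.filter fun f => e ⊆ f).card = 2
  conn : (SimpleGraph.fromRel fun i j => ({i, j} : Finset (Fin N)) ∈ edges Fc).Connected

/-- Euler characteristic χ(M) = N − |E| + |F|. -/
def chi (Fc : Finset (Finset (Fin N))) : ℤ :=
  (N : ℤ) - ((edges Fc).card : ℤ) + (Fc.card : ℤ)

/-- Edge length l_ij = √(r_i² + r_j² + 2 r_i r_j I_{ij}). -/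
noncomputable def len (I : Finset (Fin N) → ℝ) (r : Fin N → ℝ) (i j : Fin N) : ℝ :=
  Real.sqrt (r i ^ 2 + r j ^ 2 + 2 * r i * r j * I {i, j})

/-- The cosine of the inner angle at `i` in triangle `{i,j,k}`. -/
noncomputable def cosAng (I : Finset (Fin N) → ℝ) (r : Fin N → ℝ) (i j k : Fin N) : ℝ :=
  (len I r i j ^ 2 + len I r i k ^ 2 - len I r j k ^ 2) / (2 * len I r i j * len I r i k)

/-- The auxiliary function Λ. -/
noncomputable def Lam (x : ℝ) : ℝ :=
  if x ≤ -1 then π else if x ≤ 1 then Real.arccos x else 0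

/-- Discrete Gaussian curvature K_i = 2π − Σ_{{i,j,k}∈F} θ_i^{jk}.  Every face
containing `i` appears exactly twice (once for each ordering of `j,k`), whence
the factor 1/2. -/
noncomputable def K (Fc : Finset (Finset (Fin N))) (I : Finset (Fin N) → ℝ)
    (r : Fin N → ℝ) (i : Fin N) : ℝ :=
  2 * π - (1 / 2) * ∑ j, ∑ k,
    (if ({i, j, k} : Finset (Fin N)) ∈ Fc then Real.arccos (cosAng I r i j k) else 0)

/-- Extended curvature K̃_i = 2π − Σ θ̃_i^{jk}, using the generalized angles Λ. -/
noncomputable def Kt (Fc : Finset (Finset (Fin N))) (I : Finset (Fin N) → ℝ)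
    (r : Fin N → ℝ) (i : Fin N) : ℝ :=
  2 * π - (1 / 2) * ∑ j, ∑ k,
    (if ({i, j, k} : Finset (Fin N)) ∈ Fc then Lam (cosAng I r i j k) else 0)

/-- The set Ω of inversive distance circle packing metrics. -/
def Omega (Fc : Finset (Finset (Fin N))) (I : Finset (Fin N) → ℝ) : Set (Fin N → ℝ) :=
  {r | (∀ i, 0 < r i) ∧ ∀ i j k : Fin N, ({i, j, k} : Finset (Fin N)) ∈ Fc →
    len I r j k < len I r i j + len I r i k}

/-- s_α = 2πχ(M)/‖r‖_α^α. -/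
noncomputable def sA (Fc : Finset (Finset (Fin N))) (α : ℝ) (r : Fin N → ℝ) : ℝ :=
  2 * π * (chi Fc : ℝ) / ∑ j, r j ^ α

/-- Back from u-coordinates: r_i = e^{u_i}. -/
noncomputable def rOf (u : Fin N → ℝ) : Fin N → ℝ := fun i => Real.exp (u i)

/-- ln Ω, the image of Ω under the coordinate change r ↦ u, u_i = ln r_i. -/
def lnOmega (Fc : Finset (Finset (Fin N))) (I : Finset (Fin N) → ℝ) : Set (Fin N → ℝ) :=
  {u | rOf u ∈ Omega Fc I}

/-- `u` solves the α-flow du_i/dt = s_α r_i^α − K_i on the time set `D`,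
staying in ln Ω. -/
def IsFlowSol (Fc : Finset (Finset (Fin N))) (I : Finset (Fin N) → ℝ) (α : ℝ)
    (D : Set ℝ) (u : ℝ → Fin N → ℝ) : Prop :=
  ∀ t ∈ D, rOf (u t) ∈ Omega Fc I ∧
    ∀ i, HasDerivWithinAt (fun s => u s i)
      (sA Fc α (rOf (u t)) * rOf (u t) i ^ α - K Fc I (rOf (u t)) i) D t

/-- `u` solves the extended α-flow du_i/dt = s_α r_i^α − K̃_i on the time set `D`. -/
def IsExtFlowSol (Fc : Finset (Finset (Fin N))) (I : Finset (Fin N) → ℝ) (α : ℝ)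
    (D : Set ℝ) (u : ℝ → Fin N → ℝ) : Prop :=
  ∀ t ∈ D, ∀ i, HasDerivWithinAt (fun s => u s i)
      (sA Fc α (rOf (u t)) * rOf (u t) i ^ α - Kt Fc I (rOf (u t)) i) D t

/-- Lk(A): pairs (e,v) with both endpoints of e outside A, v ∈ A, and e,v spanning a face. -/
def Lk (Fc : Finset (Finset (Fin N))) (A : Finset (Fin N)) :
    Finset (Finset (Fin N) × Fin N) :=
  ((edges Fc) ×ˢ (Finset.univ : Finset (Fin N))).filter fun p =>
    (∀ x ∈ p.1, x ∉ A) ∧ p.2 ∈ A ∧ insert p.2 p.1 ∈ Fc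

/-- Euler characteristic χ(F_A) of the subcomplex spanned by A. -/
def chiSub (Fc : Finset (Finset (Fin N))) (A : Finset (Fin N)) : ℤ :=
  (A.card : ℤ) - (((edges Fc).filter (fun e => e ⊆ A)).card : ℤ)
    + ((Fc.filter (fun f => f ⊆ A)).card : ℤ)

/-- The lower bound −Σ_{(e,v)∈Lk(A)}(π − Λ(I_e)) + 2πχ(F_A) defining Y_A. -/
noncomputable def Ybound (Fc : Finset (Finset (Fin N))) (I : Finset (Fin N) → ℝ)
    (A : Finset (Fin N)) : ℝ :=
  -(∑ p ∈ Lk Fc A, (π - Lam (I p.1))) + 2 * π * (chiSub Fc A : ℝ)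

/-- x ∈ Y. -/
noncomputable def memY (Fc : Finset (Finset (Fin N))) (I : Finset (Fin N) → ℝ)
    (x : Fin N → ℝ) : Prop :=
  (∑ i, x i) = 2 * π * (chi Fc : ℝ) ∧
    ∀ A : Finset (Fin N), A.Nonempty → A ≠ Finset.univ → Ybound Fc I A < ∑ i ∈ A, x i

/-- x ∈ Ȳ. -/
noncomputable def memYbar (Fc : Finset (Finset (Fin N))) (I : Finset (Fin N) → ℝ)
    (x : Fin N → ℝ) : Prop :=
  (∑ i, x i) = 2 * π * (chi Fc : ℝ) ∧
    ∀ A : Finset (Fin N), A.Nonempty → A ≠ Finset.univ → Ybound Fc I A ≤ ∑ i ∈ A, x i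

section AUX
open Real


lemma arccos_lt_pi' {x : ℝ} (h : -1 < x) : Real.arccos x < π := by
  rcases le_or_gt x 1 with h1 | h1
  · calc Real.arccos x < Real.arccos (-1) :=
          Real.strictAntiOn_arccos ⟨le_refl _, by linarith [Real.pi_pos]⟩ ⟨h.le, h1⟩ h
    _ = π := Real.arccos_neg_one
  · rw [Real.arccos_eq_zero.mpr h1.le]; exact Real.pi_pos

lemma cos_bounds' {a b c : ℝ} (hb : 0 < b) (hc : 0 < c)
    (h1 : a < b + c) (h2 : b < a + c) (h3 : c < a + b) :
    -1 < (b^2+c^2-a^2)/(2*b*c) ∧ (b^2+c^2-a^2)/(2*b*c) < 1 := by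
  constructor
  · rw [lt_div_iff₀ (by positivity)]; nlinarith
  · rw [div_lt_iff₀ (by positivity)]; nlinarith

lemma angle_sum' {a b c : ℝ} (ha : 0 < a) (hb : 0 < b) (hc : 0 < c)
    (h1 : a < b + c) (h2 : b < a + c) (h3 : c < a + b) :
    arccos ((b^2+c^2-a^2)/(2*b*c)) + arccos ((a^2+c^2-b^2)/(2*a*c))
      + arccos ((a^2+b^2-c^2)/(2*a*b)) = π := by
  set u := (b^2+c^2-a^2)/(2*b*c) with hu
  set v := (a^2+c^2-b^2)/(2*a*c) with hv
  set w := (a^2+b^2-c^2)/(2*a*b) with hw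
  obtain ⟨hu1, hu2⟩ := cos_bounds' hb hc h1 h2 h3
  obtain ⟨hv1, hv2⟩ := cos_bounds' ha hc h2 h1 (by linarith)
  obtain ⟨hw1, hw2⟩ := cos_bounds' ha hb h3 (by linarith) (by linarith)
  set H := (a+b+c)*(-a+b+c)*(a-b+c)*(a+b-c) with hH
  have hHpos : 0 < H := by
    have p1 : 0 < a+b+c := by linarith
    have p2 : 0 < -a+b+c := by linarith
    have p3 : 0 < a-b+c := by linarith
    have p4 : 0 < a+b-c := by linarith
    positivity
  have sqH : √H * √H = H := Real.mul_self_sqrt hHpos.le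
  have sinv : Real.sin (arccos v) = √H / (2*a*c) := by
    rw [Real.sin_arccos]
    have : 1 - v^2 = H / (2*a*c)^2 := by rw [hv, hH]; field_simp; ring
    rw [this, show H / (2*a*c)^2 = H * ((2*a*c)⁻¹)^2 by ring,
      Real.sqrt_mul hHpos.le, Real.sqrt_sq (by positivity)]
    ring
  have sinw : Real.sin (arccos w) = √H / (2*a*b) := by
    rw [Real.sin_arccos]
    have : 1 - w^2 = H / (2*a*b)^2 := by rw [hw, hH]; field_simp; ring
    rw [this, show H / (2*a*b)^2 = H * ((2*a*b)⁻¹)^2 by ring,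
      Real.sqrt_mul hHpos.le, Real.sqrt_sq (by positivity)]
    ring
  have cosadd : Real.cos (arccos v + arccos w) = -u := by
    rw [Real.cos_add, Real.cos_arccos hv1.le hv2.le, Real.cos_arccos hw1.le hw2.le,
      sinv, sinw]
    rw [show √H / (2*a*c) * (√H / (2*a*b)) = H / (2*a*c*(2*a*b)) by
        rw [div_mul_div_comm, sqH], hH, hu]
    field_simp
    ring
  have sinadd : Real.sin (arccos v + arccos w) = √H / (2*b*c) := by
    rw [Real.sin_add, Real.cos_arccos hv1.le hv2.le, Real.cos_arccos hw1.le hw2.le,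
      sinv, sinw]
    field_simp
    ring
  have hsum_lt : arccos v + arccos w < π := by
    by_contra hle
    push_neg at hle
    have h2π : arccos v + arccos w - π ≤ π := by
      have := Real.arccos_le_pi v; have := Real.arccos_le_pi w; linarith
    have := Real.sin_nonneg_of_nonneg_of_le_pi (by linarith : 0 ≤ arccos v + arccos w - π) h2π
    rw [Real.sin_sub_pi, sinadd] at this
    have hpos : 0 < √H / (2*b*c) := by positivity
    linarith
  have hmem1 : arccos v + arccos w ∈ Set.Icc 0 π :=
    ⟨by have := Real.arccos_nonneg v; have := Real.arccos_nonneg w; linarith, hsum_lt.le⟩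
  have hmem2 : π - arccos u ∈ Set.Icc 0 π :=
    ⟨by have := Real.arccos_le_pi u; linarith, by have := Real.arccos_nonneg u; linarith⟩
  have : arccos v + arccos w = π - arccos u := by
    apply Real.injOn_cos hmem1 hmem2
    rw [cosadd, Real.cos_pi_sub, Real.cos_arccos hu1.le hu2.le]
  linarith

lemma triple_eq_iff' {α : Type*} [DecidableEq α] {x y z a b c : α}
    (hab : a ≠ b) (hac : a ≠ c) (hbc : b ≠ c) :
    ({x, y, z} : Finset α) = {a, b, c} ↔
      (x,y,z) = (a,b,c) ∨ (x,y,z) = (a,c,b) ∨ (x,y,z) = (b,a,c) ∨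
      (x,y,z) = (b,c,a) ∨ (x,y,z) = (c,a,b) ∨ (x,y,z) = (c,b,a) := by
  constructor
  · intro h
    have hcard : ({x,y,z} : Finset α).card = 3 := by
      rw [h, Finset.card_insert_of_notMem (by simp [hab, hac]),
        Finset.card_insert_of_notMem (by simp [hbc]), Finset.card_singleton]
    have hxy : x ≠ y := by
      rintro rfl
      have e : ({x,x,z} : Finset α) = {x,z} := by ext t; simp
      rw [e] at hcard
      have := Finset.card_insert_le x ({z} : Finset α)
      simp at this; omega
    have hxz : x ≠ z := by
      rintro rfl
      have e : ({x,y,x} : Finset α) = {x,y} := by ext t; simp; tauto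
      rw [e] at hcard
      have := Finset.card_insert_le x ({y} : Finset α)
      simp at this; omega
    have hyz : y ≠ z := by
      rintro rfl
      have e : ({x,y,y} : Finset α) = {x,y} := by ext t; simp
      rw [e] at hcard
      have := Finset.card_insert_le x ({y} : Finset α)
      simp at this; omega
    have hx : x ∈ ({a,b,c} : Finset α) := h ▸ (by simp)
    have hy : y ∈ ({a,b,c} : Finset α) := h ▸ (by simp)
    have hz : z ∈ ({a,b,c} : Finset α) := h ▸ (by simp)
    simp only [Finset.mem_insert, Finset.mem_singleton] at hx hy hz
    clear h hcard
    rcases hx with h1|h1|h1 <;> rcases hy with h2|h2|h2 <;> rcases hz with h3|h3|h3 <;>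
      subst_vars <;> simp_all
  · rintro (h|h|h|h|h|h) <;> (simp only [Prod.mk.injEq] at h; obtain ⟨rfl, rfl, rfl⟩ := h) <;>
      (ext t; simp; try tauto)

end AUX

open Real
section GEO

variable {N : ℕ} {Fc : Finset (Finset (Fin N))} {I : Finset (Fin N) → ℝ} {r : Fin N → ℝ}

lemma len_comm (I : Finset (Fin N) → ℝ) (r : Fin N → ℝ) (i j : Fin N) :
    len I r i j = len I r j i := by
  unfold len
  rw [Finset.pair_comm i j]
  congr 1
  ring

lemma cosAng_comm (I : Finset (Fin N) → ℝ) (r : Fin N → ℝ) (i j k : Fin N) :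
    cosAng I r i j k = cosAng I r i k j := by
  unfold cosAng
  rw [len_comm I r j k]
  ring

lemma face_perm1 {i j k : Fin N} (h : ({i,j,k} : Finset (Fin N)) ∈ Fc) :
    ({j,i,k} : Finset (Fin N)) ∈ Fc := by
  have e : ({j,i,k} : Finset (Fin N)) = {i,j,k} := by ext t; simp; tauto
  rwa [e]

lemma face_perm2 {i j k : Fin N} (h : ({i,j,k} : Finset (Fin N)) ∈ Fc) :
    ({k,i,j} : Finset (Fin N)) ∈ Fc := by
  have e : ({k,i,j} : Finset (Fin N)) = {i,j,k} := by ext t; simp; tauto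
  rwa [e]

lemma face_ne (hT : IsTriangulation Fc) {i j k : Fin N}
    (h : ({i,j,k} : Finset (Fin N)) ∈ Fc) : i ≠ j ∧ i ≠ k ∧ j ≠ k := by
  have h3 := hT.card3 _ h
  refine ⟨?_, ?_, ?_⟩ <;> rintro rfl
  · have e : ({i,i,k} : Finset (Fin N)) = {i,k} := by ext t; simp
    rw [e] at h3
    have := Finset.card_insert_le i ({k} : Finset (Fin N)); simp at this; omega
  · have e : ({i,j,i} : Finset (Fin N)) = {i,j} := by ext t; simp; tauto
    rw [e] at h3
    have := Finset.card_insert_le i ({j} : Finset (Fin N)); simp at this; omega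
  · have e : ({i,j,j} : Finset (Fin N)) = {i,j} := by ext t; simp
    rw [e] at h3
    have := Finset.card_insert_le i ({j} : Finset (Fin N)); simp at this; omega

lemma mem_edges_of_face {f : Finset (Fin N)} (hf : f ∈ Fc) {e : Finset (Fin N)}
    (he : e ⊆ f) (hc : e.card = 2) : e ∈ edges Fc :=
  Finset.mem_biUnion.mpr ⟨f, hf, Finset.mem_powersetCard.mpr ⟨he, hc⟩⟩

lemma pair_mem_edges (hT : IsTriangulation Fc) {i j k : Fin N}
    (h : ({i,j,k} : Finset (Fin N)) ∈ Fc) : ({j,k} : Finset (Fin N)) ∈ edges Fc := by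
  obtain ⟨hij, hik, hjk⟩ := face_ne hT h
  exact mem_edges_of_face h (by intro t ht; simp at ht ⊢; tauto)
    (by rw [Finset.card_insert_of_notMem (by simp [hjk]), Finset.card_singleton])

lemma len_pos (h0 : ∀ i, 0 < r i) {i j : Fin N} (hIij : 0 ≤ I {i,j}) :
    0 < len I r i j := by
  apply Real.sqrt_pos.mpr
  nlinarith [h0 i, h0 j, mul_nonneg (mul_nonneg (by linarith [h0 i] : (0:ℝ) ≤ 2 * r i) (h0 j).le) hIij]

lemma len_sq (h0 : ∀ i, 0 < r i) {i j : Fin N} (hIij : 0 ≤ I {i,j}) :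
    len I r i j ^ 2 = r i ^ 2 + r j ^ 2 + 2 * r i * r j * I {i,j} := by
  apply Real.sq_sqrt
  nlinarith [h0 i, h0 j, mul_nonneg (mul_nonneg (by linarith [h0 i] : (0:ℝ) ≤ 2 * r i) (h0 j).le) hIij]

lemma len_ge (h0 : ∀ i, 0 < r i) {i j : Fin N} (hIij : 0 ≤ I {i,j}) :
    r j ≤ len I r i j := by
  rw [show r j = √(r j ^ 2) from (Real.sqrt_sq (h0 j).le).symm]
  apply Real.sqrt_le_sqrt
  nlinarith [h0 i, mul_nonneg (mul_nonneg (by linarith [h0 i] : (0:ℝ) ≤ 2 * r i) (h0 j).le) hIij]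

/-- All data for a face: positivity of lengths and strict triangle inequalities. -/
lemma face_lens (hT : IsTriangulation Fc) (hI : ∀ e ∈ edges Fc, 0 ≤ I e)
    (hr : r ∈ Omega Fc I) {i j k : Fin N} (h : ({i,j,k} : Finset (Fin N)) ∈ Fc) :
    0 < len I r j k ∧ 0 < len I r i k ∧ 0 < len I r i j ∧
    len I r j k < len I r i k + len I r i j ∧
    len I r i k < len I r j k + len I r i j ∧
    len I r i j < len I r j k + len I r i k := by
  obtain ⟨h0, htri⟩ := hr
  have hIjk : 0 ≤ I {j,k} := hI _ (pair_mem_edges hT h)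
  have hIik : 0 ≤ I {i,k} := hI _ (pair_mem_edges hT (face_perm1 h))
  have hIij : 0 ≤ I {i,j} := hI _ (pair_mem_edges hT (face_perm2 h))
  have t1 := htri i j k h
  have t2 := htri j i k (face_perm1 h)
  have t3 := htri k i j (face_perm2 h)
  rw [len_comm I r j i] at t2
  rw [len_comm I r k i, len_comm I r k j] at t3
  exact ⟨len_pos h0 hIjk, len_pos h0 hIik, len_pos h0 hIij,
    by linarith, by linarith, by linarith⟩

lemma face_cos_bounds (hT : IsTriangulation Fc) (hI : ∀ e ∈ edges Fc, 0 ≤ I e)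
    (hr : r ∈ Omega Fc I) {i j k : Fin N} (h : ({i,j,k} : Finset (Fin N)) ∈ Fc) :
    -1 < cosAng I r i j k ∧ cosAng I r i j k < 1 := by
  obtain ⟨ha, hb, hc, t1, t2, t3⟩ := face_lens hT hI hr h
  have e1 : cosAng I r i j k
      = ((len I r i k)^2+(len I r i j)^2-(len I r j k)^2)/(2*(len I r i k)*(len I r i j)) := by
    unfold cosAng; ring
  rw [e1]
  exact cos_bounds' hb hc t1 t2 t3

lemma face_angle_sum (hT : IsTriangulation Fc) (hI : ∀ e ∈ edges Fc, 0 ≤ I e)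
    (hr : r ∈ Omega Fc I) {i j k : Fin N} (h : ({i,j,k} : Finset (Fin N)) ∈ Fc) :
    arccos (cosAng I r i j k) + arccos (cosAng I r j i k) + arccos (cosAng I r k i j) = π := by
  obtain ⟨ha, hb, hc, t1, t2, t3⟩ := face_lens hT hI hr h
  have e1 : cosAng I r i j k
      = ((len I r i k)^2+(len I r i j)^2-(len I r j k)^2)/(2*(len I r i k)*(len I r i j)) := by
    unfold cosAng; ring
  have e2 : cosAng I r j i k
      = ((len I r j k)^2+(len I r i j)^2-(len I r i k)^2)/(2*(len I r j k)*(len I r i j)) := by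
    unfold cosAng; rw [len_comm I r j i]; ring
  have e3 : cosAng I r k i j
      = ((len I r j k)^2+(len I r i k)^2-(len I r i j)^2)/(2*(len I r j k)*(len I r i k)) := by
    unfold cosAng; rw [len_comm I r k i, len_comm I r k j]; ring
  rw [e1, e2, e3]
  exact angle_sum' ha hb hc t1 t2 t3

lemma face_theta_lt (hT : IsTriangulation Fc) (hI : ∀ e ∈ edges Fc, 0 ≤ I e)
    (hr : r ∈ Omega Fc I) {i j k : Fin N} (h : ({i,j,k} : Finset (Fin N)) ∈ Fc) :
    arccos (cosAng I r i j k) < π - Lam (I {j,k}) := by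
  obtain ⟨h0, htri⟩ := hr
  have hIjk : 0 ≤ I {j,k} := hI _ (pair_mem_edges hT h)
  have hIik : 0 ≤ I {i,k} := hI _ (pair_mem_edges hT (face_perm1 h))
  have hIij : 0 ≤ I {i,j} := hI _ (pair_mem_edges hT (face_perm2 h))
  have lij := len_pos (I := I) h0 hIij
  have lik := len_pos (I := I) h0 hIik
  have key : -(I {j,k}) < cosAng I r i j k := by
    unfold cosAng
    rw [lt_div_iff₀ (by positivity)]
    rw [len_sq h0 hIij, len_sq h0 hIik, len_sq h0 hIjk]
    have g1 : r j ≤ len I r i j := len_ge h0 hIij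
    have g2 : r k ≤ len I r i k := len_ge h0 hIik
    have g3 : r j * r k ≤ len I r i j * len I r i k :=
      mul_le_mul g1 g2 (h0 k).le lij.le
    nlinarith [h0 i, h0 j, h0 k, mul_nonneg hIjk (sub_nonneg.mpr g3),
      mul_nonneg (mul_nonneg (h0 i).le (h0 j).le) hIij,
      mul_nonneg (mul_nonneg (h0 i).le (h0 k).le) hIik, sq_nonneg (r i)]
  obtain ⟨hb1, hb2⟩ := face_cos_bounds hT hI ⟨h0, htri⟩ h
  rcases le_or_gt (I {j,k}) 1 with hle | hgt
  · rw [Lam, if_neg (by linarith), if_pos hle]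
    rw [show π - arccos (I {j,k}) = arccos (-(I {j,k})) from (Real.arccos_neg _).trans rfl |>.symm]
    exact Real.strictAntiOn_arccos ⟨by linarith, by linarith⟩ ⟨hb1.le, hb2.le⟩ key
  · rw [Lam, if_neg (by linarith), if_neg (by linarith)]
    rw [sub_zero]
    exact arccos_lt_pi' hb1

lemma face_theta_pos (hT : IsTriangulation Fc) (hI : ∀ e ∈ edges Fc, 0 ≤ I e)
    (hr : r ∈ Omega Fc I) {i j k : Fin N} (h : ({i,j,k} : Finset (Fin N)) ∈ Fc) :
    0 < arccos (cosAng I r i j k) :=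
  Real.arccos_pos.mpr (face_cos_bounds hT hI hr h).2

end GEO

open Real
section COMB

variable {N : ℕ} {Fc : Finset (Finset (Fin N))} {I : Finset (Fin N) → ℝ} {r : Fin N → ℝ}

/-- Ordered triples (i,j,k) with i ∈ A spanning a face. -/
def trip (Fc : Finset (Finset (Fin N))) (A : Finset (Fin N)) :
    Finset (Fin N × Fin N × Fin N) :=
  (A ×ˢ ((Finset.univ : Finset (Fin N)) ×ˢ (Finset.univ : Finset (Fin N)))).filter
    fun p => ({p.1, p.2.1, p.2.2} : Finset (Fin N)) ∈ Fc

/-- Per-face upper bound function. -/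
noncomputable def Ufun (I : Finset (Fin N) → ℝ) (A : Finset (Fin N))
    (f : Finset (Fin N)) : ℝ :=
  if (f ∩ A).card = 1 then 2*(π - Lam (I (f \ A)))
  else if 2 ≤ (f ∩ A).card then 2*π else 0

lemma sum_K_eq (Fc : Finset (Finset (Fin N))) (I : Finset (Fin N) → ℝ)
    (r : Fin N → ℝ) (A : Finset (Fin N)) :
    ∑ i ∈ A, K Fc I r i
      = 2*π*A.card - (1/2) * ∑ p ∈ trip Fc A, Real.arccos (cosAng I r p.1 p.2.1 p.2.2) := by
  unfold K
  rw [Finset.sum_sub_distrib, Finset.sum_const, ← Finset.mul_sum]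
  have e : ∑ p ∈ trip Fc A, Real.arccos (cosAng I r p.1 p.2.1 p.2.2)
      = ∑ i ∈ A, ∑ j, ∑ k,
        (if ({i,j,k} : Finset (Fin N)) ∈ Fc then Real.arccos (cosAng I r i j k) else 0) := by
    rw [trip, Finset.sum_filter, Finset.sum_product]
    apply Finset.sum_congr rfl
    intro i _
    rw [Finset.sum_product]
  rw [e, nsmul_eq_mul]
  ring

lemma sum_trip_fiber (Fc : Finset (Finset (Fin N))) (A : Finset (Fin N))
    (g : Fin N × Fin N × Fin N → ℝ) :
    ∑ p ∈ trip Fc A, g p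
      = ∑ f ∈ Fc, ∑ p ∈ (trip Fc A).filter
          (fun p => ({p.1,p.2.1,p.2.2} : Finset (Fin N)) = f), g p :=
  (Finset.sum_fiberwise_of_maps_to (fun p hp => (Finset.mem_filter.mp hp).2) g).symm

set_option maxHeartbeats 1000000 in
lemma fiber_eq (A : Finset (Fin N)) {f : Finset (Fin N)} (hf : f ∈ Fc)
    {a b c : Fin N} (hab : a ≠ b) (hac : a ≠ c) (hbc : b ≠ c) (habc : f = {a,b,c}) :
    (trip Fc A).filter (fun p => ({p.1,p.2.1,p.2.2} : Finset (Fin N)) = f)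
      = (({(a,b,c),(a,c,b),(b,a,c),(b,c,a),(c,a,b),(c,b,a)} :
          Finset (Fin N × Fin N × Fin N)).filter (fun p => p.1 ∈ A)) := by
  have hmem : ∀ p : Fin N × Fin N × Fin N,
      p ∈ (trip Fc A).filter (fun p => ({p.1,p.2.1,p.2.2} : Finset (Fin N)) = f)
        ↔ (p.1 ∈ A ∧ ({p.1, p.2.1, p.2.2} : Finset (Fin N)) = f) := by
    intro p
    simp only [trip, Finset.mem_filter, Finset.mem_product, Finset.mem_univ, and_true,
      true_and]
    constructor
    · rintro ⟨⟨h1, _⟩, h2⟩; exact ⟨h1, h2⟩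
    · rintro ⟨h1, h2⟩; exact ⟨⟨h1, h2 ▸ hf⟩, h2⟩
  ext p
  obtain ⟨x, y, z⟩ := p
  rw [hmem (x,y,z), Finset.mem_filter]
  subst habc
  rw [triple_eq_iff' hab hac hbc]
  simp only [Prod.mk.injEq, Finset.mem_insert, Finset.mem_singleton]
  tauto

lemma sum_six (A : Finset (Fin N)) (g : Fin N × Fin N × Fin N → ℝ)
    {a b c : Fin N} (hab : a ≠ b) (hac : a ≠ c) (hbc : b ≠ c) :
    ∑ p ∈ (({(a,b,c),(a,c,b),(b,a,c),(b,c,a),(c,a,b),(c,b,a)} :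
        Finset (Fin N × Fin N × Fin N)).filter (fun p => p.1 ∈ A)), g p
    = (if a ∈ A then g (a,b,c) + g (a,c,b) else 0)
      + (if b ∈ A then g (b,a,c) + g (b,c,a) else 0)
      + (if c ∈ A then g (c,a,b) + g (c,b,a) else 0) := by
  rw [Finset.sum_filter]
  rw [Finset.sum_insert (by simp [Prod.ext_iff, hab, hac, hbc, hab.symm, hac.symm, hbc.symm]),
    Finset.sum_insert (by simp [Prod.ext_iff, hab, hac, hbc, hab.symm, hac.symm, hbc.symm]),
    Finset.sum_insert (by simp [Prod.ext_iff, hab, hac, hbc, hab.symm, hac.symm, hbc.symm]),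
    Finset.sum_insert (by simp [Prod.ext_iff, hab, hac, hbc, hab.symm, hac.symm, hbc.symm]),
    Finset.sum_insert (by simp [Prod.ext_iff, hab, hac, hbc, hab.symm, hac.symm, hbc.symm]),
    Finset.sum_singleton]
  by_cases ha : a ∈ A <;> by_cases hb : b ∈ A <;> by_cases hc : c ∈ A <;>
    simp [ha, hb, hc] <;> ring

/-- The per-face bound: the fiber sum is at most `Ufun`, strictly if the face
meets both `A` and its complement, with equality `2π` if `f ⊆ A`. -/
lemma face_bound (hT : IsTriangulation Fc) (hI : ∀ e ∈ edges Fc, 0 ≤ I e)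
    (hr : r ∈ Omega Fc I) (A : Finset (Fin N)) {f : Finset (Fin N)} (hf : f ∈ Fc) :
    (∑ p ∈ (trip Fc A).filter (fun p => ({p.1,p.2.1,p.2.2} : Finset (Fin N)) = f),
        Real.arccos (cosAng I r p.1 p.2.1 p.2.2)) ≤ Ufun I A f
    ∧ (((f ∩ A).Nonempty ∧ (f \ A).Nonempty) →
        (∑ p ∈ (trip Fc A).filter (fun p => ({p.1,p.2.1,p.2.2} : Finset (Fin N)) = f),
          Real.arccos (cosAng I r p.1 p.2.1 p.2.2)) < Ufun I A f)
    ∧ ((∀ x ∈ f, x ∈ A) →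
        (∑ p ∈ (trip Fc A).filter (fun p => ({p.1,p.2.1,p.2.2} : Finset (Fin N)) = f),
          Real.arccos (cosAng I r p.1 p.2.1 p.2.2)) = 2*π) := by
  obtain ⟨a, b, c, hab, hac, hbc, habc⟩ := Finset.card_eq_three.mp (hT.card3 f hf)
  have hfc : ({a,b,c} : Finset (Fin N)) ∈ Fc := habc ▸ hf
  rw [fiber_eq A hf hab hac hbc habc,
    sum_six A (fun p => Real.arccos (cosAng I r p.1 p.2.1 p.2.2)) hab hac hbc]
  simp only []
  have hsymm : ∀ i j k : Fin N,
      Real.arccos (cosAng I r i k j) = Real.arccos (cosAng I r i j k) := by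
    intro i j k; rw [cosAng_comm]
  rw [hsymm a b c, hsymm b a c, hsymm c a b]
  set θa := Real.arccos (cosAng I r a b c) with hθa
  set θb := Real.arccos (cosAng I r b a c) with hθb
  set θc := Real.arccos (cosAng I r c a b) with hθc
  have hsum : θa + θb + θc = π := face_angle_sum hT hI hr hfc
  have hpa : 0 < θa := face_theta_pos hT hI hr hfc
  have hpb : 0 < θb := face_theta_pos hT hI hr (face_perm1 hfc)
  have hpc : 0 < θc := face_theta_pos hT hI hr (face_perm2 hfc)
  have hlta : θa < π - Lam (I {b,c}) := face_theta_lt hT hI hr hfc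
  have hltb : θb < π - Lam (I {a,c}) := face_theta_lt hT hI hr (face_perm1 hfc)
  have hltc : θc < π - Lam (I {a,b}) := face_theta_lt hT hI hr (face_perm2 hfc)
  subst habc
  by_cases ha : a ∈ A <;> by_cases hb : b ∈ A <;> by_cases hc : c ∈ A
  -- case TTT
  · have hint : ({a,b,c} : Finset (Fin N)) ∩ A = {a,b,c} := by
      ext t; simp only [Finset.mem_inter, Finset.mem_insert, Finset.mem_singleton]
      constructor
      · tauto
      · rintro (rfl|rfl|rfl) <;> simp_all
    have hU : Ufun I A {a,b,c} = 2*π := by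
      rw [Ufun, hint]
      rw [Finset.card_insert_of_notMem (by simp [hab, hac]),
        Finset.card_insert_of_notMem (by simp [hbc]), Finset.card_singleton]
      norm_num
    rw [hU]
    simp only [ha, hb, hc, if_true]
    refine ⟨by linarith, ?_, fun _ => by linarith⟩
    rintro ⟨-, t, ht⟩
    rw [Finset.mem_sdiff] at ht
    rcases Finset.mem_insert.mp ht.1 with rfl | h'
    · exact absurd ha ht.2
    · rcases Finset.mem_insert.mp h' with rfl | h''
      · exact absurd hb ht.2
      · rw [Finset.mem_singleton] at h''; subst h''; exact absurd hc ht.2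
  -- case TTF
  · have hint : ({a,b,c} : Finset (Fin N)) ∩ A = {a,b} := by
      ext t; simp only [Finset.mem_inter, Finset.mem_insert, Finset.mem_singleton]
      constructor
      · rintro ⟨rfl|rfl|rfl, h2⟩ <;> tauto
      · rintro (rfl|rfl) <;> simp_all
    have hU : Ufun I A {a,b,c} = 2*π := by
      rw [Ufun, hint, Finset.card_insert_of_notMem (by simp [hab]), Finset.card_singleton]
      norm_num
    rw [hU]
    simp only [ha, hb, hc, if_true, if_false]
    constructor
    · linarith
    · exact ⟨fun _ => by linarith, fun hall => absurd (hall c (by simp)) hc⟩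
  -- case TFT
  · have hU : Ufun I A {a,b,c} = 2*π := by
      have hint : ({a,b,c} : Finset (Fin N)) ∩ A = {a,c} := by
        ext t; simp only [Finset.mem_inter, Finset.mem_insert, Finset.mem_singleton]
        constructor
        · rintro ⟨rfl|rfl|rfl, h2⟩ <;> tauto
        · rintro (rfl|rfl) <;> simp_all
      rw [Ufun, hint, Finset.card_insert_of_notMem (by simp [hac]), Finset.card_singleton]
      norm_num
    rw [hU]
    simp only [ha, hb, hc, if_true, if_false]
    constructor
    · linarith
    · exact ⟨fun _ => by linarith, fun hall => absurd (hall b (by simp)) hb⟩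
  -- case TFF
  · have hint : ({a,b,c} : Finset (Fin N)) ∩ A = {a} := by
      ext t; simp only [Finset.mem_inter, Finset.mem_insert, Finset.mem_singleton]
      constructor
      · rintro ⟨rfl|rfl|rfl, h2⟩ <;> tauto
      · rintro rfl; simp_all
    have hdiff : ({a,b,c} : Finset (Fin N)) \ A = {b,c} := by
      ext t; simp only [Finset.mem_sdiff, Finset.mem_insert, Finset.mem_singleton]
      constructor
      · rintro ⟨rfl|rfl|rfl, h2⟩ <;> tauto
      · rintro (rfl|rfl) <;> simp_all
    have hU : Ufun I A {a,b,c} = 2*(π - Lam (I {b,c})) := by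
      rw [Ufun, hint, hdiff, Finset.card_singleton, if_pos rfl]
    rw [hU]
    simp only [ha, hb, hc, if_true, if_false]
    constructor
    · linarith
    · exact ⟨fun _ => by linarith, fun hall => absurd (hall b (by simp)) hb⟩
  -- case FTT
  · have hU : Ufun I A {a,b,c} = 2*π := by
      have hint : ({a,b,c} : Finset (Fin N)) ∩ A = {b,c} := by
        ext t; simp only [Finset.mem_inter, Finset.mem_insert, Finset.mem_singleton]
        constructor
        · rintro ⟨rfl|rfl|rfl, h2⟩ <;> tauto
        · rintro (rfl|rfl) <;> simp_all
      rw [Ufun, hint, Finset.card_insert_of_notMem (by simp [hbc]), Finset.card_singleton]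
      norm_num
    rw [hU]
    simp only [ha, hb, hc, if_true, if_false]
    constructor
    · linarith
    · exact ⟨fun _ => by linarith, fun hall => absurd (hall a (by simp)) ha⟩
  -- case FTF
  · have hint : ({a,b,c} : Finset (Fin N)) ∩ A = {b} := by
      ext t; simp only [Finset.mem_inter, Finset.mem_insert, Finset.mem_singleton]
      constructor
      · rintro ⟨rfl|rfl|rfl, h2⟩ <;> tauto
      · rintro rfl; simp_all
    have hdiff : ({a,b,c} : Finset (Fin N)) \ A = {a,c} := by
      ext t; simp only [Finset.mem_sdiff, Finset.mem_insert, Finset.mem_singleton]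
      constructor
      · rintro ⟨rfl|rfl|rfl, h2⟩ <;> tauto
      · rintro (rfl|rfl) <;> simp_all
    have hU : Ufun I A {a,b,c} = 2*(π - Lam (I {a,c})) := by
      rw [Ufun, hint, hdiff, Finset.card_singleton, if_pos rfl]
    rw [hU]
    simp only [ha, hb, hc, if_true, if_false]
    constructor
    · linarith
    · exact ⟨fun _ => by linarith, fun hall => absurd (hall a (by simp)) ha⟩
  -- case FFT
  · have hint : ({a,b,c} : Finset (Fin N)) ∩ A = {c} := by
      ext t; simp only [Finset.mem_inter, Finset.mem_insert, Finset.mem_singleton]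
      constructor
      · rintro ⟨rfl|rfl|rfl, h2⟩ <;> tauto
      · rintro rfl; simp_all
    have hdiff : ({a,b,c} : Finset (Fin N)) \ A = {a,b} := by
      ext t; simp only [Finset.mem_sdiff, Finset.mem_insert, Finset.mem_singleton]
      constructor
      · rintro ⟨rfl|rfl|rfl, h2⟩ <;> tauto
      · rintro (rfl|rfl) <;> simp_all
    have hU : Ufun I A {a,b,c} = 2*(π - Lam (I {a,b})) := by
      rw [Ufun, hint, hdiff, Finset.card_singleton, if_pos rfl]
    rw [hU]
    simp only [ha, hb, hc, if_true, if_false]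
    constructor
    · linarith
    · exact ⟨fun _ => by linarith, fun hall => absurd (hall a (by simp)) ha⟩
  -- case FFF
  · have hint : ({a,b,c} : Finset (Fin N)) ∩ A = ∅ := by
      ext t; simp only [Finset.mem_inter, Finset.mem_insert, Finset.mem_singleton,
        Finset.notMem_empty, iff_false, not_and]
      rintro (rfl|rfl|rfl) <;> assumption
    have hU : Ufun I A {a,b,c} = 0 := by
      rw [Ufun, hint, Finset.card_empty]
      norm_num
    rw [hU]
    simp only [ha, hb, hc, if_false]
    refine ⟨by linarith, ?_, fun hall => absurd (hall a (by simp)) ha⟩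
    rintro ⟨⟨t, ht⟩, -⟩
    rw [hint] at ht
    exact absurd ht (Finset.notMem_empty t)

end COMB

open Real
section COMB2

variable {N : ℕ} {Fc : Finset (Finset (Fin N))} {I : Finset (Fin N) → ℝ} {r : Fin N → ℝ}

lemma lk_sum (hT : IsTriangulation Fc) (I : Finset (Fin N) → ℝ) (A : Finset (Fin N)) :
    ∑ p ∈ Lk Fc A, 2*(π - Lam (I p.1))
      = ∑ f ∈ Fc.filter (fun f => (f ∩ A).card = 1), 2*(π - Lam (I (f \ A))) := by
  apply Finset.sum_bij (i := fun p _ => insert p.2 p.1)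
  · intro p hp
    simp only [Lk, Finset.mem_filter, Finset.mem_product, Finset.mem_univ, and_true] at hp
    obtain ⟨he, hout, hv, hface⟩ := hp
    refine Finset.mem_filter.mpr ⟨hface, ?_⟩
    have hinter : insert p.2 p.1 ∩ A = {p.2} := by
      ext t
      simp only [Finset.mem_inter, Finset.mem_insert, Finset.mem_singleton]
      constructor
      · rintro ⟨rfl | ht, hA⟩
        · rfl
        · exact absurd hA (hout t ht)
      · rintro rfl; exact ⟨Or.inl rfl, hv⟩
    rw [hinter, Finset.card_singleton]
  · intro p hp q hq heq
    simp only [Lk, Finset.mem_filter, Finset.mem_product, Finset.mem_univ, and_true] at hp hq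
    obtain ⟨hep, houtp, hvp, hfacep⟩ := hp
    obtain ⟨heq', houtq, hvq, hfaceq⟩ := hq
    have hv : p.2 = q.2 := by
      have : q.2 ∈ insert p.2 p.1 := heq ▸ Finset.mem_insert_self _ _
      rcases Finset.mem_insert.mp this with h | h
      · exact h.symm
      · exact absurd hvq (houtp _ h)
    have hpnot : p.2 ∉ p.1 := fun h => (houtp _ h) hvp
    have hqnot : q.2 ∉ q.1 := fun h => (houtq _ h) hvq
    have he : p.1 = q.1 := by
      have e1 : p.1 = (insert p.2 p.1).erase p.2 := (Finset.erase_insert hpnot).symm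
      have e2 : q.1 = (insert q.2 q.1).erase q.2 := (Finset.erase_insert hqnot).symm
      rw [e1, e2, heq, hv]
    exact Prod.ext he hv
  · intro f hf
    simp only [Finset.mem_filter] at hf
    obtain ⟨hfFc, hcard⟩ := hf
    obtain ⟨v, hv⟩ := Finset.card_eq_one.mp hcard
    have hvA : v ∈ A := by
      have : v ∈ f ∩ A := hv ▸ Finset.mem_singleton_self v
      exact (Finset.mem_inter.mp this).2
    have hvf : v ∈ f := by
      have : v ∈ f ∩ A := hv ▸ Finset.mem_singleton_self v
      exact (Finset.mem_inter.mp this).1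
    have hecard : (f \ A).card = 2 := by
      have := Finset.card_inter_add_card_sdiff f A
      rw [hcard, hT.card3 f hfFc] at this
      omega
    have hinsert : insert v (f \ A) = f := by
      ext t
      simp only [Finset.mem_insert, Finset.mem_sdiff]
      constructor
      · rintro (rfl | ⟨h1, _⟩)
        · exact hvf
        · exact h1
      · intro ht
        by_cases htA : t ∈ A
        · left
          have : t ∈ f ∩ A := Finset.mem_inter.mpr ⟨ht, htA⟩
          rw [hv] at this
          exact Finset.mem_singleton.mp this
        · right; exact ⟨ht, htA⟩
    refine ⟨(f \ A, v), ?_, ?_⟩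
    · simp only [Lk, Finset.mem_filter, Finset.mem_product, Finset.mem_univ, and_true]
      refine ⟨mem_edges_of_face hfFc Finset.sdiff_subset hecard, ?_, hvA, ?_⟩
      · intro x hx; exact (Finset.mem_sdiff.mp hx).2
      · rw [hinsert]; exact hfFc
    · exact hinsert
  · intro p hp
    simp only [Lk, Finset.mem_filter, Finset.mem_product, Finset.mem_univ, and_true] at hp
    obtain ⟨he, hout, hv, hface⟩ := hp
    have : insert p.2 p.1 \ A = p.1 := by
      ext t
      simp only [Finset.mem_sdiff, Finset.mem_insert]
      constructor
      · rintro ⟨rfl | ht, htA⟩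
        · exact absurd hv htA
        · exact ht
      · intro ht; exact ⟨Or.inr ht, hout t ht⟩
    rw [this]

lemma sum_U (hT : IsTriangulation Fc) (I : Finset (Fin N) → ℝ) (A : Finset (Fin N)) :
    ∑ f ∈ Fc, Ufun I A f
      = (∑ p ∈ Lk Fc A, 2*(π - Lam (I p.1)))
        + 2*π*(((Fc.filter (fun f => (f ∩ A).card = 3)).card : ℝ)
              + ((Fc.filter (fun f => (f ∩ A).card = 2)).card : ℝ)) := by
  have hsplit : ∀ f ∈ Fc, Ufun I A f
      = (if (f ∩ A).card = 1 then 2*(π - Lam (I (f \ A))) else 0)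
        + (if 2 ≤ (f ∩ A).card then 2*π else 0) := by
    intro f _
    unfold Ufun
    by_cases h1 : (f ∩ A).card = 1
    · rw [if_pos h1, if_pos h1, if_neg (by omega)]; ring
    · rw [if_neg h1, if_neg h1, zero_add]
  rw [Finset.sum_congr rfl hsplit, Finset.sum_add_distrib]
  congr 1
  · rw [← Finset.sum_filter, lk_sum hT I A]
  · rw [← Finset.sum_filter, Finset.sum_const, nsmul_eq_mul]
    have hfeq : Fc.filter (fun f => 2 ≤ (f ∩ A).card)
        = Fc.filter (fun f => (f ∩ A).card = 3 ∨ (f ∩ A).card = 2) := by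
      apply Finset.filter_congr
      intro f hf
      have h3 : (f ∩ A).card ≤ 3 :=
        (Finset.card_le_card Finset.inter_subset_left).trans (hT.card3 f hf).le
      constructor <;> intro h <;> omega
    rw [hfeq, Finset.filter_or,
      Finset.card_union_of_disjoint (by
        rw [Finset.disjoint_left]
        intro f h1 h2
        simp only [Finset.mem_filter] at h1 h2
        omega)]
    push_cast
    ring

lemma double_count (hT : IsTriangulation Fc) (A : Finset (Fin N)) :
    2 * ((edges Fc).filter (fun e => e ⊆ A)).card
      = 3 * (Fc.filter (fun f => (f ∩ A).card = 3)).card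
        + (Fc.filter (fun f => (f ∩ A).card = 2)).card := by
  classical
  set EA := (edges Fc).filter (fun e => e ⊆ A) with hEA
  have lhs : ∑ e ∈ EA, (Fc.filter (fun f => e ⊆ f)).card = 2 * EA.card := by
    rw [Finset.sum_congr rfl (fun e he => hT.edge2 e (Finset.mem_filter.mp he).1),
      Finset.sum_const, smul_eq_mul, mul_comm]
  have swap : ∑ e ∈ EA, (Fc.filter (fun f => e ⊆ f)).card
      = ∑ f ∈ Fc, (EA.filter (fun e => e ⊆ f)).card := by
    simp_rw [Finset.card_filter]
    rw [Finset.sum_comm]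
  have per : ∀ f ∈ Fc, (EA.filter (fun e => e ⊆ f)).card = ((f ∩ A).card).choose 2 := by
    intro f hf
    have e : EA.filter (fun e => e ⊆ f) = (f ∩ A).powersetCard 2 := by
      ext e
      simp only [hEA, Finset.mem_filter, Finset.mem_powersetCard, edges, Finset.mem_biUnion]
      constructor
      · rintro ⟨⟨⟨f', hf', hef'⟩, heA⟩, hef⟩
        exact ⟨Finset.subset_inter hef heA, hef'.2⟩
      · rintro ⟨hsub, hc⟩
        have h1 : e ⊆ f := hsub.trans Finset.inter_subset_left
        have h2 : e ⊆ A := hsub.trans Finset.inter_subset_right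
        exact ⟨⟨⟨f, hf, ⟨h1, hc⟩⟩, h2⟩, h1⟩
    rw [e, Finset.card_powersetCard]
  have expand : ∀ f ∈ Fc, ((f ∩ A).card).choose 2
      = 3 * (if (f ∩ A).card = 3 then 1 else 0) + (if (f ∩ A).card = 2 then 1 else 0) := by
    intro f hf
    have h3 : (f ∩ A).card ≤ 3 :=
      (Finset.card_le_card Finset.inter_subset_left).trans (hT.card3 f hf).le
    set m := (f ∩ A).card with hm
    interval_cases m <;> simp
  calc 2 * EA.card = ∑ e ∈ EA, (Fc.filter (fun f => e ⊆ f)).card := lhs.symm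
    _ = ∑ f ∈ Fc, (EA.filter (fun e => e ⊆ f)).card := swap
    _ = ∑ f ∈ Fc, ((f ∩ A).card).choose 2 := Finset.sum_congr rfl per
    _ = ∑ f ∈ Fc, (3 * (if (f ∩ A).card = 3 then 1 else 0)
          + (if (f ∩ A).card = 2 then 1 else 0)) := Finset.sum_congr rfl expand
    _ = 3 * (Fc.filter (fun f => (f ∩ A).card = 3)).card
          + (Fc.filter (fun f => (f ∩ A).card = 2)).card := by
        rw [Finset.sum_add_distrib, ← Finset.mul_sum, ← Finset.card_filter, ← Finset.card_filter]

lemma crossing (hT : IsTriangulation Fc) {A : Finset (Fin N)}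
    (hA : A.Nonempty) (hA2 : A ≠ Finset.univ) :
    ∃ f ∈ Fc, (f ∩ A).Nonempty ∧ (f \ A).Nonempty := by
  obtain ⟨a, ha⟩ := hA
  obtain ⟨b, hb⟩ : ∃ b, b ∉ A := by
    by_contra h
    push_neg at h
    exact hA2 (Finset.eq_univ_iff_forall.mpr h)
  obtain ⟨w⟩ := hT.conn.preconnected a b
  obtain ⟨d, _, hdA, hdB⟩ := w.exists_boundary_dart (↑A : Set (Fin N))
    (by simpa using ha) (by simpa using hb)
  have hadj := d.adj
  rw [SimpleGraph.fromRel_adj] at hadj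
  obtain ⟨hne, hcase⟩ := hadj
  have hedge : ({d.fst, d.snd} : Finset (Fin N)) ∈ edges Fc := by
    rcases hcase with h | h
    · exact h
    · rwa [Finset.pair_comm]
  obtain ⟨f, hf, hsub⟩ : ∃ f ∈ Fc, ({d.fst, d.snd} : Finset (Fin N)) ⊆ f := by
    simp only [edges, Finset.mem_biUnion] at hedge
    obtain ⟨f, hf, hp⟩ := hedge
    exact ⟨f, hf, (Finset.mem_powersetCard.mp hp).1⟩
  refine ⟨f, hf, ⟨d.fst, ?_⟩, ⟨d.snd, ?_⟩⟩
  · exact Finset.mem_inter.mpr ⟨hsub (by simp), by simpa using hdA⟩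
  · exact Finset.mem_sdiff.mpr ⟨hsub (by simp), by simpa using hdB⟩

lemma filter_subset_eq (hT : IsTriangulation Fc) (A : Finset (Fin N)) :
    Fc.filter (fun f => f ⊆ A) = Fc.filter (fun f => (f ∩ A).card = 3) := by
  apply Finset.filter_congr
  intro f hf
  constructor
  · intro h
    rw [Finset.inter_eq_left.mpr h]
    exact hT.card3 f hf
  · intro h
    have : f ∩ A = f := Finset.eq_of_subset_of_card_le Finset.inter_subset_left
      (by rw [h, hT.card3 f hf])
    exact Finset.inter_eq_left.mp this

end COMB2

open Real

theorem stmt13_aux {N : ℕ} (Fc : Finset (Finset (Fin N))) (hT : IsTriangulation Fc)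
    (I : Finset (Fin N) → ℝ) (hI : ∀ e ∈ edges Fc, 0 ≤ I e)
    (r : Fin N → ℝ) (hr : r ∈ Omega Fc I) :
    (∑ i, K Fc I r i) = 2 * π * (chi Fc : ℝ) ∧
    ∀ A : Finset (Fin N), A.Nonempty → A ≠ Finset.univ →
      Ybound Fc I A < ∑ i ∈ A, K Fc I r i := by
  constructor
  · -- total curvature
    have hK := sum_K_eq Fc I r Finset.univ
    have hfib := sum_trip_fiber Fc Finset.univ
      (fun p => Real.arccos (cosAng I r p.1 p.2.1 p.2.2))
    have hface : ∀ f ∈ Fc, (∑ p ∈ (trip Fc Finset.univ).filter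
        (fun p => ({p.1,p.2.1,p.2.2} : Finset (Fin N)) = f),
        Real.arccos (cosAng I r p.1 p.2.1 p.2.2)) = 2*π :=
      fun f hf => (face_bound hT hI hr Finset.univ hf).2.2 (fun x _ => Finset.mem_univ x)
    have htrip : ∑ p ∈ trip Fc Finset.univ, Real.arccos (cosAng I r p.1 p.2.1 p.2.2)
        = (Fc.card : ℝ) * (2*π) := by
      rw [hfib, Finset.sum_congr rfl hface, Finset.sum_const, nsmul_eq_mul]
    have hd := double_count hT (Finset.univ : Finset (Fin N))
    have he1 : (edges Fc).filter (fun e => e ⊆ Finset.univ) = edges Fc :=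
      Finset.filter_true_of_mem (fun e _ => Finset.subset_univ e)
    have he3 : Fc.filter (fun f => (f ∩ Finset.univ).card = 3) = Fc :=
      Finset.filter_true_of_mem (fun f hf => by
        rw [Finset.inter_univ]; exact hT.card3 f hf)
    have he2 : Fc.filter (fun f => (f ∩ Finset.univ).card = 2) = ∅ :=
      Finset.filter_false_of_mem (fun f hf => by
        simp [Finset.inter_univ, hT.card3 f hf])
    rw [he1, he3, he2, Finset.card_empty] at hd
    have hdR : 2*((edges Fc).card : ℝ) = 3*(Fc.card : ℝ) := by exact_mod_cast hd
    rw [hK, htrip]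
    have hcard : ((Finset.univ : Finset (Fin N)).card : ℝ) = N := by simp
    rw [hcard]
    unfold chi
    push_cast
    linear_combination π * hdR
  · -- the Y_A inequalities
    intro A hA1 hA2
    have hK := sum_K_eq Fc I r A
    have hfib := sum_trip_fiber Fc A (fun p => Real.arccos (cosAng I r p.1 p.2.1 p.2.2))
    obtain ⟨f₀, hf₀, hcross1, hcross2⟩ := crossing hT hA1 hA2
    have hlt : ∑ p ∈ trip Fc A, Real.arccos (cosAng I r p.1 p.2.1 p.2.2)
        < ∑ f ∈ Fc, Ufun I A f := by
      rw [hfib]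
      exact Finset.sum_lt_sum (fun f hf => (face_bound hT hI hr A hf).1)
        ⟨f₀, hf₀, (face_bound hT hI hr A hf₀).2.1 ⟨hcross1, hcross2⟩⟩
    have hU := sum_U hT I A
    have hd := double_count hT A
    have hchi : ((chiSub Fc A : ℤ) : ℝ)
        = (A.card : ℝ) - (((edges Fc).filter (fun e => e ⊆ A)).card : ℝ)
          + ((Fc.filter (fun f => (f ∩ A).card = 3)).card : ℝ) := by
      unfold chiSub
      rw [filter_subset_eq hT A]
      push_cast
      ring
    have hdR : 2*(((edges Fc).filter (fun e => e ⊆ A)).card : ℝ)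
        = 3*((Fc.filter (fun f => (f ∩ A).card = 3)).card : ℝ)
          + ((Fc.filter (fun f => (f ∩ A).card = 2)).card : ℝ) := by exact_mod_cast hd
    have hYeq : Ybound Fc I A = 2*π*(A.card : ℝ) - (1/2) * ∑ f ∈ Fc, Ufun I A f := by
      unfold Ybound
      rw [hU, hchi,
        show (∑ p ∈ Lk Fc A, 2*(π - Lam (I p.1)))
          = 2 * ∑ p ∈ Lk Fc A, (π - Lam (I p.1)) from (Finset.mul_sum _ _ _).symm]
      linear_combination (-π) * hdR
    rw [hYeq, hK]
    linarith


/-- for every r ∈ Ω the curvature vector K(r) lies in Y: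
Σ_i K_i = 2πχ(M) and Σ_{i∈A} K_i > −Σ_{(e,v)∈Lk(A)}(π − Λ(I_e)) + 2πχ(F_A)
for every nonempty proper A ⊂ V. -/
theorem stmt13 {N : ℕ} (Fc : Finset (Finset (Fin N))) (hT : IsTriangulation Fc)
    (I : Finset (Fin N) → ℝ) (hI : ∀ e ∈ edges Fc, 0 ≤ I e)
    (r : Fin N → ℝ) (hr : r ∈ Omega Fc I) :
    (∑ i, K Fc I r i) = 2 * π * (chi Fc : ℝ) ∧
    ∀ A : Finset (Fin N), A.Nonempty → A ≠ Finset.univ →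
      Ybound Fc I A < ∑ i ∈ A, K Fc I r i :=
  stmt13_aux Fc hT I hI r hr

end IDCP
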